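/- arXiv:2409.04914 — 2 statements merged into one kernel-verified Lean document; each statement's English description precedes it below -/
import Mathlib

section
/- The mechanism that selects a rank-optimal contingent stable matching under absolute priorities is not strategy-proof for families: there exists an instance with a single family-level tie-breaker in which, when all families report truthfully, the unique rank-optimal contingent stable matching leaves a student s unassigned, but if s's family misreports by extending its preference list, the resulting rank-optimal contingent stable matching assigns s to a school s truly prefers to being unassigned. -/
open scoped Classical

/-- A many-to-one matching market with levels, families, priority groups and
random tie-breakers, as in "Stable Matching with Contingent Priorities". -/
structure Market where
  Student : Type
  School : Type
  Level : Type
  [instFinS : Fintype Student]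
  [instDecS : DecidableEq Student]
  [instFinC : Fintype School]
  [instDecC : DecidableEq School]
  [instFinL : Fintype Level]
  [instDecL : DecidableEq Level]
  level : Student → Level
  sameFamily : Student → Student → Prop
  fam_refl : ∀ s, sameFamily s s
  fam_symm : ∀ s s', sameFamily s s' → sameFamily s' s
  fam_trans : ∀ s s' s'', sameFamily s s' → sameFamily s' s'' → sameFamily s s''
  cap : School → Level → ℕ
  /-- strict preference of each student over schools plus the outside option `none` -/
  pref : Student → Option School → Option School → Prop
  pref_irrefl : ∀ s o, ¬ pref s o o
  pref_trans : ∀ s o₁ o₂ o₃, pref s o₁ o₂ → pref s o₂ o₃ → pref s o₁ o₃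
  pref_total : ∀ s o o', o ≠ o' → pref s o o' ∨ pref s o' o
  nGroups : ℕ
  nGroups_pos : 1 ≤ nGroups
  group : Student → School → ℕ
  group_pos : ∀ s c, 1 ≤ group s c
  group_le : ∀ s c, group s c ≤ nGroups
  /-- random tie-breakers (smaller is better) -/
  tb : Student → School → ℝ
  tb_distinct : ∀ c s s', s ≠ s' → tb s c ≠ tb s' c

attribute [instance] Market.instFinS Market.instDecS Market.instFinC
  Market.instDecC Market.instFinL Market.instDecL

namespace Market

variable (M : Market)

/-- `s` weakly prefers `o` to `o'`. -/
def wPref (s : M.Student) (o o' : Option M.School) : Prop :=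
  o = o' ∨ M.pref s o o'

/-- A feasible matching: every assigned student finds their school acceptable and the
school offers seats at their level, and per-level capacities are respected. -/
def IsMatching (μ : M.Student → Option M.School) : Prop :=
  (∀ s c, μ s = some c → M.pref s (some c) none ∧ 0 < M.cap c (M.level s)) ∧
  (∀ c ℓ, (Finset.univ.filter fun s => μ s = some c ∧ M.level s = ℓ).card ≤ M.cap c ℓ)

/-- Number of students of level `ℓ` assigned to `c`. -/
noncomputable def assignedCount (μ : M.Student → Option M.School) (c : M.School)
    (ℓ : M.Level) : ℕ :=
  (Finset.univ.filter fun s => μ s = some c ∧ M.level s = ℓ).card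

/-- Non-wastefulness. -/
def NonWasteful (μ : M.Student → Option M.School) : Prop :=
  ¬ ∃ s c, M.pref s (some c) (μ s) ∧
    M.assignedCount μ c (M.level s) < M.cap c (M.level s)

/-- Initial priority order at school `c` (groups first, tie-breakers second). -/
def initPrio (c : M.School) (s s' : M.Student) : Prop :=
  M.group s c < M.group s' c ∨ (M.group s c = M.group s' c ∧ M.tb s c < M.tb s' c)

/-- Initial stability. -/
def InitStable (μ : M.Student → Option M.School) : Prop :=
  M.IsMatching μ ∧ M.NonWasteful μ ∧
  ¬ ∃ s s' c, μ s' = some c ∧ M.level s = M.level s' ∧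
      M.pref s (some c) (μ s) ∧ M.initPrio c s s'

/-- Number of students of `s`'s level with strictly higher initial priority at `c`
who weakly prefer `c` to their match. -/
noncomputable def rivalCount (μ : M.Student → Option M.School) (s : M.Student)
    (c : M.School) : ℕ :=
  (Finset.univ.filter fun s'' => M.level s'' = M.level s ∧ M.initPrio c s'' s ∧
    M.wPref s'' (some c) (μ s'')).card

/-- `s` provides contingent priority at `c` (Definition 2, refined). -/
def Provides (μ : M.Student → Option M.School) (s : M.Student) (c : M.School) : Prop :=
  μ s = some c ∧
  (∃ s', s' ≠ s ∧ M.sameFamily s s' ∧ M.wPref s' (some c) (μ s')) ∧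
  M.rivalCount μ s c < M.cap c (M.level s)

/-- `s` is the effective priority provider of their family at `c`: the provider with
the most favorable tie-breaker. -/
def EffProvider (μ : M.Student → Option M.School) (s : M.Student) (c : M.School) : Prop :=
  M.Provides μ s c ∧
  ∀ s', s' ≠ s → M.sameFamily s s' → M.Provides μ s' c → M.tb s c < M.tb s' c

/-- Contingent group under absolute priorities. -/
noncomputable def absGroup (μ : M.Student → Option M.School) (s : M.Student)
    (c : M.School) : ℕ :=
  if M.group s c < M.nGroups ∨
      (M.EffProvider μ s c ∧ ∃ s', s' ≠ s ∧ M.sameFamily s s' ∧ μ s' = some c) ∨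
      (∃ s', s' ≠ s ∧ M.sameFamily s s' ∧ M.EffProvider μ s' c)
  then M.group s c else M.nGroups + 1

/-- Contingent priority order under absolute priorities. -/
noncomputable def absPrio (μ : M.Student → Option M.School) (c : M.School)
    (s s' : M.Student) : Prop :=
  M.absGroup μ s c < M.absGroup μ s' c ∨
  (M.absGroup μ s c = M.absGroup μ s' c ∧ M.tb s c < M.tb s' c)

/-- Contingent stability under absolute priorities. -/
def AbsStable (μ : M.Student → Option M.School) : Prop :=
  M.IsMatching μ ∧ M.NonWasteful μ ∧
  ¬ ∃ s s' c, μ s' = some c ∧ M.level s = M.level s' ∧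
      M.pref s (some c) (μ s) ∧ M.absPrio μ c s s'

/-- Contingent tie-breaker under partial priorities: a no-priority student inherits
their effective provider's tie-breaker when it is more favorable. -/
noncomputable def partialTb (μ : M.Student → Option M.School) (s : M.Student)
    (c : M.School) : ℝ :=
  if h : M.group s c = M.nGroups ∧ ¬ M.EffProvider μ s c ∧
      ∃ s', s' ≠ s ∧ M.sameFamily s s' ∧ M.EffProvider μ s' c ∧ M.tb s' c < M.tb s c
  then M.tb h.2.2.choose c
  else M.tb s c

/-- Contingent priority order under partial priorities: groups unchanged, contingent
tie-breakers first, with residual ties (within a family) broken by the initial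
tie-breakers (the ε-perturbation of Definition 5). -/
noncomputable def partialPrio (μ : M.Student → Option M.School) (c : M.School)
    (s s' : M.Student) : Prop :=
  M.group s c < M.group s' c ∨
  (M.group s c = M.group s' c ∧
    (M.partialTb μ s c < M.partialTb μ s' c ∨
      (M.partialTb μ s c = M.partialTb μ s' c ∧ M.tb s c < M.tb s' c)))

/-- Contingent stability under partial priorities. -/
def PartialStable (μ : M.Student → Option M.School) : Prop :=
  M.IsMatching μ ∧ M.NonWasteful μ ∧
  ¬ ∃ s s' c, μ s' = some c ∧ M.level s = M.level s' ∧
      M.pref s (some c) (μ s) ∧ M.partialPrio μ c s s'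

/-- Tie-breakers are at the family level: members of a family compare the same way
against any student outside the family. -/
def FamilyTB : Prop :=
  ∀ c (s s' a : M.Student), M.sameFamily s s' → ¬ M.sameFamily s a →
    (M.tb s c < M.tb a c ↔ M.tb s' c < M.tb a c)

/-- Size of the family of `s`. -/
noncomputable def famSize (s : M.Student) : ℕ :=
  (Finset.univ.filter fun s' => M.sameFamily s s').card

/-- Number of families in the market. -/
noncomputable def numFamilies : ℕ :=
  (Finset.univ.image fun s : M.Student =>
    Finset.univ.filter fun s' => M.sameFamily s s').card

/-- Rank of an outcome in a student's preference list (`none` gets rank `|≻ₛ|+1`,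
the penalty for being unassigned). -/
noncomputable def rankVal (s : M.Student) (o : Option M.School) : ℕ :=
  (Finset.univ.filter fun c : M.School => M.pref s (some c) o).card + 1

/-- Total rank objective of a matching. -/
noncomputable def cost (μ : M.Student → Option M.School) : ℕ :=
  ∑ s, M.rankVal s (μ s)

/-- Rank-optimal contingent stable matching under absolute priorities. -/
def RankOptAbs (μ : M.Student → Option M.School) : Prop :=
  M.AbsStable μ ∧ ∀ μ', M.AbsStable μ' → M.cost μ ≤ M.cost μ'

/-- Rank-optimal contingent stable matching under partial priorities. -/
def RankOptPartial (μ : M.Student → Option M.School) : Prop :=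
  M.PartialStable μ ∧ ∀ μ', M.PartialStable μ' → M.cost μ ≤ M.cost μ'

end Market

/-!
Three students compete for one school that has one seat at each of two levels, and nobody has
initial priority. Student `2` has the best tie-breaker and shares level 0 with student `0`, whose
sibling `1` (alone at level 1) truly finds the school unacceptable. Under truthful reports nobody
can provide contingent priority, so the tie-breaker gives the level-0 seat to `2` and `0` stays
unassigned. If `1` claims the school is acceptable, it fills the otherwise empty level-1 seat and
becomes the effective priority provider of `0`: now `0` keeps its group while `2` is demoted, so
`0` wins the level-0 seat. In both markets the contingent stable matching is unique, hence it is
the rank-optimal one.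
-/

namespace Market

variable (M : Market) {μ ν : M.Student → Option M.School} {s s' : M.Student} {c : M.School}

theorem rankOptAbs_iff_of_unique (hμ : M.AbsStable μ)
    (huniq : ∀ ν, M.AbsStable ν → ν = μ) : M.RankOptAbs ν ↔ ν = μ := by
  refine ⟨fun h => huniq ν h.1, ?_⟩
  rintro rfl
  exact ⟨hμ, fun μ' h' => by rw [huniq μ' h']⟩

theorem isMatching_iff_of_cap_eq_one (hcap : ∀ c ℓ, M.cap c ℓ = 1) :
    M.IsMatching μ ↔ (∀ s c, μ s = some c → M.pref s (some c) none) ∧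
      ∀ s s' c, μ s = some c → μ s' = some c → M.level s = M.level s' → s = s' := by
  simp only [IsMatching, hcap, Nat.one_pos, and_true, Finset.card_le_one, Finset.mem_filter,
    Finset.mem_univ, true_and]
  refine and_congr_right fun _ =>
    ⟨fun h s s' c hs hs' hl => h c _ s ⟨hs, rfl⟩ s' ⟨hs', hl.symm⟩,
      fun h c ℓ s ⟨hs, hl⟩ s' ⟨hs', hl'⟩ => h s s' c hs hs' (hl.trans hl'.symm)⟩

theorem nonWasteful_iff_of_cap_eq_one (hcap : ∀ c ℓ, M.cap c ℓ = 1) :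
    M.NonWasteful μ ↔
      ∀ s c, M.pref s (some c) (μ s) → ∃ s', μ s' = some c ∧ M.level s' = M.level s := by
  simp only [NonWasteful, assignedCount, hcap, Nat.lt_one_iff, Finset.card_eq_zero,
    Finset.filter_eq_empty_iff, Finset.mem_univ, true_implies, not_and]
  push Not
  rfl

theorem absStable_iff_of_cap_eq_one (hcap : ∀ c ℓ, M.cap c ℓ = 1) :
    M.AbsStable μ ↔ M.IsMatching μ ∧ ∀ s c, M.pref s (some c) (μ s) →
      ∃ s', μ s' = some c ∧ M.level s' = M.level s ∧ ¬ M.absPrio μ c s s' := by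
  rw [AbsStable, M.nonWasteful_iff_of_cap_eq_one hcap]
  refine and_congr_right fun hm =>
    ⟨fun ⟨hw, he⟩ s c hp => ?_, fun h => ⟨fun s c hp => ?_, ?_⟩⟩
  · obtain ⟨s', hs', hl⟩ := hw s c hp
    exact ⟨s', hs', hl, fun hprio => he ⟨s, s', c, hs', hl.symm, hp, hprio⟩⟩
  · obtain ⟨s', hs', hl, -⟩ := h s c hp
    exact ⟨s', hs', hl⟩
  · rintro ⟨s, s', c, hs', hl, hp, hprio⟩
    obtain ⟨t, ht, htl, hnot⟩ := h s c hp
    obtain rfl := ((M.isMatching_iff_of_cap_eq_one hcap).1 hm).2 t s' c ht hs' (htl.trans hl)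
    exact hnot hprio

theorem rivalCount_eq_zero_of_level_unique (h : ∀ s', M.level s' = M.level s → s' = s) :
    M.rivalCount μ s c = 0 := by
  rw [rivalCount, Finset.card_eq_zero, Finset.filter_eq_empty_iff]
  rintro s' - ⟨hl, hprio, -⟩
  obtain rfl := h s' hl
  rcases hprio with h | ⟨-, h⟩ <;> exact lt_irrefl _ h

theorem rivalCount_pos (hl : M.level s' = M.level s) (hprio : M.initPrio c s' s)
    (hw : M.wPref s' (some c) (μ s')) : 0 < M.rivalCount μ s c :=
  Finset.card_pos.2 ⟨s', Finset.mem_filter.2 ⟨Finset.mem_univ _, hl, hprio, hw⟩⟩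

theorem not_provides_of_isolated (h : ∀ s', M.sameFamily s s' → s' = s) :
    ¬ M.Provides μ s c :=
  fun ⟨_, ⟨s', hne, hfam, _⟩, _⟩ => hne (h s' hfam)

theorem absGroup_eq_of_not_provides (hg : M.group s c = M.nGroups) (hs : ¬ M.Provides μ s c)
    (hsib : ∀ s', s' ≠ s → M.sameFamily s s' → ¬ M.Provides μ s' c) :
    M.absGroup μ s c = M.nGroups + 1 := by
  rw [absGroup, if_neg]
  rintro (h | ⟨h, -⟩ | ⟨s', hne, hfam, h⟩)
  · exact h.ne hg
  · exact hs h.1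
  · exact hsib s' hne hfam h.1

theorem absGroup_eq_group_of_sibling_effProvider (hne : s' ≠ s) (hfam : M.sameFamily s s')
    (h : M.EffProvider μ s' c) : M.absGroup μ s c = M.group s c :=
  if_pos (Or.inr (Or.inr ⟨s', hne, hfam, h⟩))

end Market

namespace AbsNotStrategyproof

/-- `fav s` is the outcome student `s` ranks first; with only two outcomes this fixes `s`'s
preference. -/
abbrev market (fav : Fin 3 → Option Unit) : Market where
  Student := Fin 3
  School := Unit
  Level := Fin 2
  level := ![0, 1, 0]
  sameFamily s s' := (s = 2 ↔ s' = 2)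
  fam_refl _ := Iff.rfl
  fam_symm _ _ h := h.symm
  fam_trans _ _ _ h h' := h.trans h'
  cap _ _ := 1
  pref s o o' := o = fav s ∧ o' ≠ o
  pref_irrefl _ _ h := h.2 rfl
  pref_trans _ _ _ _ h h' := (h.2 (h'.1.trans h.1.symm)).elim
  pref_total s o o' h := by
    revert h; generalize fav s = f
    rcases o with _ | ⟨⟨⟩⟩ <;> rcases o' with _ | ⟨⟨⟩⟩ <;> rcases f with _ | ⟨⟨⟩⟩ <;> decide
  nGroups := 1
  nGroups_pos := le_rfl
  group _ _ := 1
  group_pos _ _ := le_rfl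
  group_le _ _ := le_rfl
  tb s _ := ![1, 2, 0] s
  tb_distinct _ s s' h := by fin_cases s <;> fin_cases s' <;> simp_all

def truthful : Fin 3 → Option Unit := ![some (), none, some ()]

def misreport : Fin 3 → Option Unit := fun _ => some ()

def truthfulOutcome : Fin 3 → Option Unit := ![none, none, some ()]

def misreportOutcome : Fin 3 → Option Unit := ![some (), some (), none]

variable {fav : Fin 3 → Option Unit} {μ : Fin 3 → Option Unit}

theorem pref_some_iff (s : Fin 3) (o : Option Unit) :
    (market fav).pref s (some ()) o ↔ fav s = some () ∧ o = none := by
  rcases o with _ | ⟨⟩ <;> simp [eq_comm]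

theorem wPref_some_iff (s : Fin 3) (o : Option Unit) :
    (market fav).wPref s (some ()) o ↔ o = some () ∨ fav s = some () := by
  rcases o with _ | ⟨⟩ <;> simp [Market.wPref, eq_comm]

theorem cap_eq_one : ∀ c ℓ, (market fav).cap c ℓ = 1 := fun _ _ => rfl

theorem absGroup_two : (market fav).absGroup μ 2 () = 2 :=
  Market.absGroup_eq_of_not_provides _ rfl
    (Market.not_provides_of_isolated _ fun s' h => by simpa using h)
    fun s' hne h => absurd (by simpa using h.symm) hne

theorem absGroup_eq_of_unassigned_one (h1 : fav 1 = none) (hμ : μ 1 = none) (s : Fin 3) :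
    (market fav).absGroup μ s () = 2 := by
  have hnp : ∀ t, ¬ (market fav).Provides μ t () := by
    rintro t ⟨ht, ⟨s', hne, hfam, hw⟩, -⟩
    rw [wPref_some_iff] at hw
    fin_cases t <;> fin_cases s' <;> simp_all
  exact Market.absGroup_eq_of_not_provides _ rfl (hnp s) fun t _ _ => hnp t

theorem effProvider_one (h1 : μ 1 = some ()) (hw : (market fav).wPref 0 (some ()) (μ 0))
    (h0 : ¬ (market fav).Provides μ 0 ()) : (market fav).EffProvider μ 1 () := by
  refine ⟨⟨h1, ⟨0, by simp, by simp, hw⟩, ?_⟩, fun s' hne hfam hp => ?_⟩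
  · rw [Market.rivalCount_eq_zero_of_level_unique]
    · exact Nat.one_pos
    · intro s' hl; fin_cases s' <;> simp_all
  · fin_cases s' <;> simp_all

theorem absGroup_zero_of_effProvider_one (h : (market fav).EffProvider μ 1 ()) :
    (market fav).absGroup μ 0 () = 1 :=
  Market.absGroup_eq_group_of_sibling_effProvider _ (by simp) (by simp) h

theorem familyTB : (market fav).FamilyTB := by
  intro c s s' a hss hsa
  fin_cases s <;> fin_cases s' <;> fin_cases a <;> simp_all <;> norm_num

theorem absStable_truthfulOutcome : (market truthful).AbsStable truthfulOutcome := by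
  rw [Market.absStable_iff_of_cap_eq_one _ cap_eq_one,
    Market.isMatching_iff_of_cap_eq_one _ cap_eq_one]
  refine ⟨⟨fun s c hs => ?_, fun s s' c hs hs' _ => ?_⟩, fun s c hp => ?_⟩
  · fin_cases s <;> simp_all [truthfulOutcome, truthful]
  · fin_cases s <;> fin_cases s' <;> simp_all [truthfulOutcome]
  · obtain ⟨⟩ := c
    rw [pref_some_iff] at hp
    obtain rfl : s = 0 := by fin_cases s <;> simp_all [truthful, truthfulOutcome]
    refine ⟨2, rfl, rfl, ?_⟩
    simp [Market.absPrio,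
      absGroup_eq_of_unassigned_one (fav := truthful) (μ := truthfulOutcome) rfl rfl]

theorem eq_truthfulOutcome_of_absStable (h : (market truthful).AbsStable μ) :
    μ = truthfulOutcome := by
  rw [Market.absStable_iff_of_cap_eq_one _ cap_eq_one,
    Market.isMatching_iff_of_cap_eq_one _ cap_eq_one] at h
  obtain ⟨⟨hacc, hseat⟩, hdes⟩ := h
  have h1 : μ 1 = none := Option.eq_none_iff_forall_ne_some.2 fun c hc => by
    simpa [pref_some_iff, truthful] using hacc 1 c hc
  have h2 : μ 2 = some () := by
    by_contra h2
    obtain ⟨s', hs', hl, hnot⟩ :=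
      hdes 2 () ((pref_some_iff 2 _).2 ⟨rfl, Option.eq_none_iff_forall_ne_some.2 fun _ => h2⟩)
    fin_cases s' <;>
      simp_all [Market.absPrio, absGroup_eq_of_unassigned_one (fav := truthful) rfl h1]
  have h0 : μ 0 = none := Option.eq_none_iff_forall_ne_some.2 fun c hc =>
    absurd (hseat 0 2 c hc h2 rfl) (by decide)
  funext s
  fin_cases s <;> simp [truthfulOutcome, *]

theorem absStable_misreportOutcome : (market misreport).AbsStable misreportOutcome := by
  have heff : (market misreport).EffProvider misreportOutcome 1 () := by
    refine effProvider_one rfl (Or.inl rfl) fun ⟨_, _, hriv⟩ => ?_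
    -- student `2` outranks `0` for the level-0 seat and wants it, so `0` cannot provide
    have h2 := Market.rivalCount_pos (market misreport) (s' := 2) (s := 0) (c := ())
      (μ := misreportOutcome) rfl (Or.inr ⟨rfl, by simp⟩) ((wPref_some_iff _ _).2 (Or.inr rfl))
    exact h2.ne' (Nat.lt_one_iff.1 hriv)
  rw [Market.absStable_iff_of_cap_eq_one _ cap_eq_one,
    Market.isMatching_iff_of_cap_eq_one _ cap_eq_one]
  refine ⟨⟨fun s c hs => ?_, fun s s' c hs hs' hl => ?_⟩, fun s c hp => ?_⟩
  · exact (pref_some_iff _ _).2 ⟨rfl, rfl⟩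
  · fin_cases s <;> fin_cases s' <;> simp_all [misreportOutcome]
  · obtain ⟨⟩ := c
    rw [pref_some_iff] at hp
    obtain rfl : s = 2 := by fin_cases s <;> simp_all [misreportOutcome]
    refine ⟨0, rfl, rfl, ?_⟩
    simp [Market.absPrio, absGroup_two, absGroup_zero_of_effProvider_one heff]

theorem eq_misreportOutcome_of_absStable (h : (market misreport).AbsStable μ) :
    μ = misreportOutcome := by
  rw [Market.absStable_iff_of_cap_eq_one _ cap_eq_one,
    Market.isMatching_iff_of_cap_eq_one _ cap_eq_one] at h
  obtain ⟨⟨-, hseat⟩, hdes⟩ := h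
  have h1 : μ 1 = some () := by
    by_contra h1
    obtain ⟨s', hs', hl, -⟩ :=
      hdes 1 () ((pref_some_iff 1 _).2 ⟨rfl, Option.eq_none_iff_forall_ne_some.2 fun _ => h1⟩)
    fin_cases s' <;> simp_all
  have h0 : μ 0 = some () := by
    by_contra h0
    have heff : (market misreport).EffProvider μ 1 () :=
      effProvider_one h1 ((wPref_some_iff _ _).2 (Or.inr rfl)) fun hp => h0 hp.1
    obtain ⟨s', hs', hl, hnot⟩ :=
      hdes 0 () ((pref_some_iff 0 _).2 ⟨rfl, Option.eq_none_iff_forall_ne_some.2 fun _ => h0⟩)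
    fin_cases s' <;> simp_all [Market.absPrio, absGroup_two, absGroup_zero_of_effProvider_one heff]
  have h2 : μ 2 = none := Option.eq_none_iff_forall_ne_some.2 fun c hc =>
    absurd (hseat 2 0 c hc h0 rfl) (by decide)
  funext s
  fin_cases s <;> simp [misreportOutcome, *]

theorem rankOptAbs_truthful_iff : (market truthful).RankOptAbs μ ↔ μ = truthfulOutcome :=
  Market.rankOptAbs_iff_of_unique _ absStable_truthfulOutcome
    fun _ => eq_truthfulOutcome_of_absStable

theorem rankOptAbs_misreport_iff : (market misreport).RankOptAbs μ ↔ μ = misreportOutcome :=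
  Market.rankOptAbs_iff_of_unique _ absStable_misreportOutcome
    fun _ => eq_misreportOutcome_of_absStable

end AbsNotStrategyproof

open AbsNotStrategyproof in
/-- The mechanism selecting a rank-optimal contingent stable matching
under absolute priorities is not strategy-proof for families: with a single
family-level tie-breaker, truthful reports leave student s₀ unassigned in every
rank-optimal contingent stable matching, but if s₀'s family misreports by
extending its preference lists, every rank-optimal contingent stable matching of
the misreported market assigns s₀ to a school s₀ truly prefers to being
unassigned. -/
theorem abs_not_strategyproof :
    ∃ (M : Market) (s0 : M.Student)
      (P' : M.Student → Option M.School → Option M.School → Prop)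
      (h1 : ∀ s o, ¬ P' s o o)
      (h2 : ∀ s o₁ o₂ o₃, P' s o₁ o₂ → P' s o₂ o₃ → P' s o₁ o₃)
      (h3 : ∀ s o o', o ≠ o' → P' s o o' ∨ P' s o' o),
      -- single tie-breaker at the family level
      (∀ s c c', M.tb s c = M.tb s c') ∧ M.FamilyTB ∧
      -- only s₀'s family misreports, and it does so by extending its lists
      (∀ s, ¬ M.sameFamily s0 s → P' s = M.pref s) ∧
      (∀ s c, M.sameFamily s0 s → M.pref s (some c) none → P' s (some c) none) ∧
      -- under truthful reports s₀ is unassigned in the rank-optimal outcome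
      (∃ μ, M.RankOptAbs μ) ∧
      (∀ μ, M.RankOptAbs μ → μ s0 = none) ∧
      -- under the misreport s₀ is assigned to a truly acceptable school
      (let M' : Market :=
        { M with pref := P', pref_irrefl := h1, pref_trans := h2, pref_total := h3 }
       (∃ μ', M'.RankOptAbs μ') ∧
       (∀ μ' : M.Student → Option M.School, M'.RankOptAbs μ' →
         ∃ c, μ' s0 = some c ∧ M.pref s0 (some c) none)) := by
  refine ⟨market truthful, 0, (market misreport).pref, (market misreport).pref_irrefl,
    (market misreport).pref_trans, (market misreport).pref_total, fun _ _ _ => rfl, familyTB,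
    fun s hs => ?_, fun s _ _ _ => (pref_some_iff s none).2 ⟨rfl, rfl⟩,
    ⟨_, rankOptAbs_truthful_iff.2 rfl⟩, fun μ h => by rw [rankOptAbs_truthful_iff.1 h]; rfl,
    ⟨_, rankOptAbs_misreport_iff.2 rfl⟩,
    fun μ h => ⟨(), ?_, (pref_some_iff 0 none).2 ⟨rfl, rfl⟩⟩⟩
  · obtain rfl : s = 2 := by fin_cases s <;> simp_all
    rfl
  · rw [rankOptAbs_misreport_iff.1 h]
    rfl
end

section
/- Let μ be a contingent stable matching (under either absolute or partial priorities) and c a school. If a family f with |f| ≥ 2 has some member s with μ(s) = c and another member s' ∈ f \ {s} with μ(s') weakly less preferred by s' than c, then f has at least one member matched to c who satisfies the conditions of an effective priority provider at c: namely, a member a with μ(a)=c such that the number of students in level ℓ(a) with strictly higher initial priority at c than a who weakly prefer c to their own match is at most q_c^{ℓ(a)} − 1. -/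
open scoped Classical

/-! If `s` sits at `c` but has at least `q_c^ℓ` initial-priority rivals who weakly prefer `c`,
one of them strictly prefers `c` (the seats cannot hold all of them and `s`). Stability then
forbids that rival from outranking `s` contingently, which is only possible when the family of
`s` has an effective priority provider at `c`; that provider is matched to `c` and claims a
seat by definition. -/

namespace Market

variable {M : Market} {μ : M.Student → Option M.School} {c : M.School} {s t : M.Student}

lemma initPrio_irrefl (c : M.School) (s : M.Student) : ¬ M.initPrio c s s := by
  rintro (h | ⟨-, h⟩) <;> exact lt_irrefl _ h

lemma rivalCount_lt_cap_of_forall_matched (hμ : M.IsMatching μ) (hs : μ s = some c)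
    (hrivals : ∀ t, M.level t = M.level s → M.initPrio c t s →
      M.wPref t (some c) (μ t) → μ t = some c) :
    M.rivalCount μ s c < M.cap c (M.level s) := by
  set seated := Finset.univ.filter fun t => μ t = some c ∧ M.level t = M.level s
  have hsub : (Finset.univ.filter fun t => M.level t = M.level s ∧ M.initPrio c t s ∧
      M.wPref t (some c) (μ t)) ⊆ seated.erase s := by
    intro t ht
    simp only [Finset.mem_filter, Finset.mem_univ, true_and] at ht
    obtain ⟨hlev, hprio, hpref⟩ := ht
    simp only [seated, Finset.mem_erase, Finset.mem_filter, Finset.mem_univ, true_and]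
    exact ⟨fun h => initPrio_irrefl c s (h ▸ hprio), hrivals t hlev hprio hpref, hlev⟩
  have hs_mem : s ∈ seated := by simp [seated, hs]
  calc M.rivalCount μ s c ≤ (seated.erase s).card := Finset.card_le_card hsub
    _ < seated.card := Finset.card_erase_lt_of_mem hs_mem
    _ ≤ M.cap c (M.level s) := hμ.2 c (M.level s)

lemma exists_rival_pref_of_cap_le_rivalCount (hμ : M.IsMatching μ) (hs : μ s = some c)
    (hcap : M.cap c (M.level s) ≤ M.rivalCount μ s c) :
    ∃ t, M.level t = M.level s ∧ M.initPrio c t s ∧ M.pref t (some c) (μ t) := by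
  by_contra! h
  refine (rivalCount_lt_cap_of_forall_matched hμ hs fun t hlev hprio hpref => ?_).not_ge hcap
  exact hpref.resolve_right (h t hlev hprio) |>.symm

lemma absGroup_le (μ : M.Student → Option M.School) (t : M.Student) (c : M.School) :
    M.absGroup μ t c ≤ if M.group t c < M.nGroups then M.group t c else M.nGroups + 1 := by
  have := M.group_le t c
  unfold absGroup
  split_ifs <;> omega

lemma absGroup_of_no_effProvider (hno : ∀ a, M.sameFamily s a → ¬ M.EffProvider μ a c) :
    M.absGroup μ s c = if M.group s c < M.nGroups then M.group s c else M.nGroups + 1 := by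
  have hfam : ¬ ((M.EffProvider μ s c ∧ ∃ a, a ≠ s ∧ M.sameFamily s a ∧ μ a = some c) ∨
      ∃ a, a ≠ s ∧ M.sameFamily s a ∧ M.EffProvider μ a c) := by
    rintro (⟨he, -⟩ | ⟨a, -, ha, he⟩)
    exacts [hno s (M.fam_refl s) he, hno a ha he]
  unfold absGroup
  by_cases hg : M.group s c < M.nGroups <;> simp [hg, hfam]

/-- Both contingent groups are bounded by the strictly monotone relabelling that sends the
last group to `nGroups + 1`, with equality for `s`. -/
lemma absPrio_of_initPrio (hno : ∀ a, M.sameFamily s a → ¬ M.EffProvider μ a c)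
    (h : M.initPrio c t s) : M.absPrio μ c t s := by
  have ht := absGroup_le μ t c
  have hs := absGroup_of_no_effProvider hno
  have := M.group_le s c
  unfold absPrio
  rcases h with hg | ⟨hg, htb⟩
  · left
    split_ifs at ht hs <;> omega
  · rcases (show M.absGroup μ t c ≤ M.absGroup μ s c by split_ifs at ht hs <;> omega).lt_or_eq
      with hlt | heq
    exacts [Or.inl hlt, Or.inr ⟨heq, htb⟩]

lemma partialTb_le (μ : M.Student → Option M.School) (t : M.Student) (c : M.School) :
    M.partialTb μ t c ≤ M.tb t c := by
  unfold partialTb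
  split
  · next h => exact h.2.2.choose_spec.2.2.2.le
  · exact le_rfl

lemma partialTb_of_no_effProvider (hno : ∀ a, M.sameFamily s a → ¬ M.EffProvider μ a c) :
    M.partialTb μ s c = M.tb s c := by
  unfold partialTb
  rw [dif_neg]
  rintro ⟨-, -, a, -, ha, he, -⟩
  exact hno a ha he

lemma partialPrio_of_initPrio (hno : ∀ a, M.sameFamily s a → ¬ M.EffProvider μ a c)
    (h : M.initPrio c t s) : M.partialPrio μ c t s := by
  rcases h with hg | ⟨hg, htb⟩
  · exact Or.inl hg
  · refine Or.inr ⟨hg, Or.inl ?_⟩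
    rw [partialTb_of_no_effProvider hno]
    exact (partialTb_le μ t c).trans_lt htb

end Market

theorem exists_provider_in_stable_general (M : Market) (μ : M.Student → Option M.School)
    (hstab : M.AbsStable μ ∨ M.PartialStable μ) (c : M.School)
    (s : M.Student)
    (hs : μ s = some c) :
    ∃ a, M.sameFamily s a ∧ μ a = some c ∧
      M.rivalCount μ a c < M.cap c (M.level a) := by
  by_contra hclaim
  have hno : ∀ a, M.sameFamily s a → ¬ M.EffProvider μ a c :=
    fun a ha he => hclaim ⟨a, ha, he.1.1, he.1.2.2⟩
  have hμ : M.IsMatching μ := hstab.elim (·.1) (·.1)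
  obtain ⟨t, hlev, hprio, hpref⟩ := Market.exists_rival_pref_of_cap_le_rivalCount hμ hs
    (not_lt.mp fun h => hclaim ⟨s, M.fam_refl s, hs, h⟩)
  rcases hstab with habs | hpar
  · exact habs.2.2 ⟨t, s, c, hs, hlev, hpref, Market.absPrio_of_initPrio hno hprio⟩
  · exact hpar.2.2 ⟨t, s, c, hs, hlev, hpref, Market.partialPrio_of_initPrio hno hprio⟩

/-- In any contingent stable matching (absolute or partial), if a
family has a member s matched to c and another member s' who weakly prefers c to
their own match, then the family has a member matched to c who satisfies the
effective-provider seat-claiming condition at c. -/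
theorem exists_provider_in_stable (M : Market) (μ : M.Student → Option M.School)
    (hstab : M.AbsStable μ ∨ M.PartialStable μ) (c : M.School)
    (s s' : M.Student) (hne : s' ≠ s) (hfam : M.sameFamily s s')
    (hs : μ s = some c) (hs' : M.wPref s' (some c) (μ s')) :
    ∃ a, M.sameFamily s a ∧ μ a = some c ∧
      M.rivalCount μ a c < M.cap c (M.level a) :=
  exists_provider_in_stable_general M μ hstab c s hs
end
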